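/- The graph L(K₆) × K₂, the bipartite double cover of the line graph of the complete graph on 6 vertices, is connected and total 8-uniform, i.e., γ_t(L(K₆) × K₂) = γ_gr^t(L(K₆) × K₂) = 8. -/

import Mathlib

open SimpleGraph

/-- `A ⊆ V(G)` is a total dominating set of `G`: every vertex has a neighbor in `A`. -/
def TotalDomSet {V : Type*} (G : SimpleGraph V) (A : Set V) : Prop :=
  ∀ v : V, ∃ a ∈ A, G.Adj v a

/-- `s` is a legal (open neighborhood) sequence of `G`: the vertices are distinct and every
vertex after the first has a neighbor adjacent to no vertex preceding it in the sequence. -/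
def LegalSeq {V : Type*} (G : SimpleGraph V) (s : List V) : Prop :=
  s.Nodup ∧ ∀ (i : ℕ) (h : i < s.length), 0 < i →
    ∃ w : V, G.Adj (s.get ⟨i, h⟩) w ∧ ∀ u ∈ s.take i, ¬ G.Adj u w

/-- `s` is a total dominating sequence of `G`: a legal sequence whose underlying set is a
total dominating set. -/
def TotalDomSeq {V : Type*} (G : SimpleGraph V) (s : List V) : Prop :=
  LegalSeq G s ∧ TotalDomSet G {v | v ∈ s}

/-- The total domination number `γ_t(G)`: the minimum size of a total dominating set. -/
noncomputable def totalDomNum {V : Type*} (G : SimpleGraph V) : ℕ :=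
  sInf {n | ∃ A : Set V, TotalDomSet G A ∧ A.ncard = n}

/-- The Grundy total domination number `γ_gr^t(G)`: the maximum length of a total dominating
sequence. -/
noncomputable def grundyTotalDomNum {V : Type*} (G : SimpleGraph V) : ℕ :=
  sSup {n | ∃ s : List V, TotalDomSeq G s ∧ s.length = n}

/-- `G` is total `k`-uniform if `γ_t(G) = γ_gr^t(G) = k`. -/
def TotalKUniform {V : Type*} (G : SimpleGraph V) (k : ℕ) : Prop :=
  totalDomNum G = k ∧ grundyTotalDomNum G = k

/-- `G` has no isolated vertices. -/
def NoIsolatedVerts {V : Type*} (G : SimpleGraph V) : Prop :=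
  ∀ v : V, ∃ w : V, G.Adj v w

/-- The closed neighborhood `N[v] = N(v) ∪ {v}`. -/
def closedNbhd {V : Type*} (G : SimpleGraph V) (v : V) : Set V :=
  insert v (G.neighborSet v)

/-- `G` is false twin-free: no two distinct vertices have the same (open) neighborhood. -/
def FalseTwinFree {V : Type*} (G : SimpleGraph V) : Prop :=
  ∀ u v : V, u ≠ v → G.neighborSet u ≠ G.neighborSet v

/-- The line graph `L(Kₙ)` of the complete graph `Kₙ`: vertices are the 2-element subsets of
`{1, …, n}`, two of them being adjacent iff they are distinct and intersect. -/
def lineK (n : ℕ) : SimpleGraph {s : Finset (Fin n) // s.card = 2} where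
  Adj a b := a ≠ b ∧ (a.1 ∩ b.1).Nonempty
  symm := ⟨fun a b h => ⟨h.1.symm, by rw [Finset.inter_comm]; exact h.2⟩⟩
  loopless := ⟨fun a h => h.1 rfl⟩

/-- The direct (tensor) product of graphs: `(g,h)` is adjacent to `(g',h')` iff
`gg' ∈ E(G)` and `hh' ∈ E(H)`. In particular `directProd G (⊤ : SimpleGraph (Fin 2))` is the
bipartite double cover `G × K₂` of `G`. -/
def directProd {V W : Type*} (G : SimpleGraph V) (H : SimpleGraph W) :
    SimpleGraph (V × W) where
  Adj a b := G.Adj a.1 b.1 ∧ H.Adj a.2 b.2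
  symm := ⟨fun a b h => ⟨h.1.symm, h.2.symm⟩⟩
  loopless := ⟨fun a h => G.ne_of_adj h.1 rfl⟩


/-!
Over `ZMod 2`, the adjacency rows of a legal sequence are triangular with respect to chosen
private neighbours, hence linearly independent, so `γ_gr^t` is at most the rank of the adjacency
matrix. For `L(K₆) × K₂` this rank is `8`: writing `S_i` for the star of edges at `i`, the
neighbourhood of `{i, j}` in `L(K₆)` is `S_i + S_j`, and `S_0 + ⋯ + S_5 = 0`. Conversely, a total
dominating set of `G × K₂` meets each layer in a total dominating set of `G`, and no three
vertices totally dominate `L(K₆)`, so `γ_t ≥ 8`. The spokes `{0, k}`, `1 ≤ k ≤ 4`, in both layers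
form a total dominating sequence of length `8`. Connectivity holds because `L(K₆)` is connected
and every vertex lies on a triangle, along which a lifted walk can change layers.
-/

instance (n : ℕ) : DecidableRel (lineK n).Adj := fun a b =>
  inferInstanceAs (Decidable (a ≠ b ∧ (a.1 ∩ b.1).Nonempty))

instance {V W : Type*} (G : SimpleGraph V) (H : SimpleGraph W) [DecidableRel G.Adj]
    [DecidableRel H.Adj] : DecidableRel (directProd G H).Adj := fun a b =>
  inferInstanceAs (Decidable (G.Adj a.1 b.1 ∧ H.Adj a.2 b.2))

abbrev doubleCover {V : Type*} (G : SimpleGraph V) : SimpleGraph (V × Fin 2) :=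
  directProd G ⊤

theorem linearIndependent_of_triangular {K ι : Type*} [CommRing K] [IsDomain K] {n : ℕ}
    {f : Fin n → ι → K} (w : Fin n → ι) (hdiag : ∀ i, f i (w i) ≠ 0)
    (htri : ∀ i j, i < j → f i (w j) = 0) : LinearIndependent K f := by
  let M : Matrix (Fin n) (Fin n) K := Matrix.of fun i j => f i (w j)
  have hdet : M.det ≠ 0 := by
    rw [Matrix.det_of_isLowerTriangular M fun i j hij => htri i j hij]
    exact Finset.prod_ne_zero_iff.mpr fun i _ => hdiag i
  exact .of_comp (LinearMap.funLeft K K w) (Matrix.linearIndependent_rows_of_det_ne_zero hdet)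

theorem Fin.two_add_one_ne (ε : Fin 2) : ε + 1 ≠ ε := by
  revert ε; decide

theorem Fin.two_eq_of_add_one_ne {ε δ : Fin 2} (h : ε + 1 ≠ δ) : δ = ε := by
  revert ε δ; decide

section Domination

variable {V : Type*} {G : SimpleGraph V}

theorem LegalSeq.exists_privateNeighbor {s : List V} (hG : NoIsolatedVerts G)
    (hs : LegalSeq G s) (i : Fin s.length) :
    ∃ w, G.Adj (s.get i) w ∧ ∀ j : Fin s.length, j < i → ¬ G.Adj (s.get j) w := by
  rcases Nat.eq_zero_or_pos i with hi | hi
  · obtain ⟨w, hw⟩ := hG (s.get i)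
    exact ⟨w, hw, fun j hj => absurd hj (by simp [Fin.lt_def, hi])⟩
  · obtain ⟨w, hw, hpriv⟩ := hs.2 i i.2 hi
    refine ⟨w, hw, fun j hj => hpriv _ ?_⟩
    rw [List.mem_take_iff_getElem]
    exact ⟨j, lt_min hj j.2, rfl⟩

theorem LegalSeq.length_le_rank_adjMatrix (K : Type*) [Field K] [Fintype V] [DecidableRel G.Adj]
    {s : List V} (hG : NoIsolatedVerts G) (hs : LegalSeq G s) :
    s.length ≤ (G.adjMatrix K).rank := by
  choose w hadj hpriv using hs.exists_privateNeighbor hG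
  have hli : LinearIndependent K fun i => G.adjMatrix K (s.get i) :=
    linearIndependent_of_triangular w
      (fun i => by simp only [adjMatrix_apply, if_pos (hadj i)]; exact one_ne_zero)
      (fun i j hij => by simp only [adjMatrix_apply, if_neg (hpriv j i hij)])
  rw [Matrix.rank_eq_finrank_span_row, ← Fintype.card_fin s.length, ← finrank_span_eq_card hli]
  exact Submodule.finrank_mono (Submodule.span_mono (Set.range_comp_subset_range _ _))

theorem TotalDomSet.mono {A B : Set V} (hA : TotalDomSet G A) (hAB : A ⊆ B) :
    TotalDomSet G B := fun v =>
  let ⟨a, ha, hva⟩ := hA v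
  ⟨a, hAB ha, hva⟩

theorem TotalDomSeq.totalKUniform {s : List V} (hs : TotalDomSeq G s)
    (hγ : ∀ A, TotalDomSet G A → s.length ≤ A.ncard)
    (hgr : ∀ t, LegalSeq G t → t.length ≤ s.length) : TotalKUniform G s.length := by
  classical
  have hcard : {v | v ∈ s}.ncard = s.length := by
    rw [show {v | v ∈ s} = (s.toFinset : Set V) by ext; simp, Set.ncard_coe_finset,
      List.toFinset_card_of_nodup hs.1.1]
  have hub : ∀ n ∈ {n | ∃ t, TotalDomSeq G t ∧ t.length = n}, n ≤ s.length := by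
    rintro n ⟨t, ht, rfl⟩
    exact hgr t ht.1
  constructor
  · refine le_antisymm (Nat.sInf_le ⟨_, hs.2, hcard⟩) (le_csInf ⟨_, _, hs.2, hcard⟩ ?_)
    rintro n ⟨A, hA, rfl⟩
    exact hγ A hA
  · exact le_antisymm (csSup_le ⟨_, s, hs, rfl⟩ hub) (le_csSup ⟨_, hub⟩ ⟨s, hs, rfl⟩)

end Domination

section DoubleCover

variable {V : Type*} {G : SimpleGraph V}

theorem NoIsolatedVerts.doubleCover (hG : NoIsolatedVerts G) : NoIsolatedVerts (doubleCover G) :=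
  fun ⟨v, ε⟩ =>
    let ⟨w, hvw⟩ := hG v
    ⟨(w, ε + 1), hvw, (Fin.two_add_one_ne ε).symm⟩

theorem TotalDomSet.fiber {A : Set (V × Fin 2)} (hA : TotalDomSet (doubleCover G) A)
    (ε : Fin 2) : TotalDomSet G {v | (v, ε) ∈ A} := by
  intro v
  obtain ⟨⟨a, δ⟩, haA, hva, hεδ⟩ := hA (v, ε + 1)
  obtain rfl := Fin.two_eq_of_add_one_ne hεδ
  exact ⟨a, haA, hva⟩

theorem TotalDomSet.two_mul_le_ncard [Finite V] {k : ℕ}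
    (hG : ∀ B, TotalDomSet G B → k ≤ B.ncard) {A : Set (V × Fin 2)}
    (hA : TotalDomSet (doubleCover G) A) : 2 * k ≤ A.ncard := by
  let layer (ε : Fin 2) : Set (V × Fin 2) := (·, ε) '' {v | (v, ε) ∈ A}
  have hinj (ε : Fin 2) : Function.Injective fun v : V => (v, ε) :=
    fun _ _ h => congrArg Prod.fst h
  have hdisj : Disjoint (layer 0) (layer 1) :=
    Set.disjoint_left.mpr <| by rintro _ ⟨v, -, rfl⟩ ⟨w, -, h⟩; simp at h
  have hsub : layer 0 ∪ layer 1 ⊆ A :=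
    Set.union_subset (by rintro _ ⟨v, hv, rfl⟩; exact hv) (by rintro _ ⟨v, hv, rfl⟩; exact hv)
  calc 2 * k ≤ {v | (v, 0) ∈ A}.ncard + {v | (v, 1) ∈ A}.ncard := by
        linarith [hG _ (hA.fiber 0), hG _ (hA.fiber 1)]
    _ = (layer 0 ∪ layer 1).ncard := by
        rw [Set.ncard_union_eq hdisj, Set.ncard_image_of_injective _ (hinj 0),
          Set.ncard_image_of_injective _ (hinj 1)]
    _ ≤ A.ncard := Set.ncard_le_ncard hsub

theorem doubleCover_connected (hG : G.Connected)
    (htri : ∀ v, ∃ u w, G.Adj v u ∧ G.Adj u w ∧ G.Adj w v) : (doubleCover G).Connected := by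
  have hswitch (v : V) (ε δ : Fin 2) : (doubleCover G).Reachable (v, ε) (v, δ) := by
    obtain ⟨u, w, hvu, huw, hwv⟩ := htri v
    rcases eq_or_ne ε δ with rfl | hεδ
    · rfl
    · have h₁ : (doubleCover G).Adj (v, ε) (u, δ) := ⟨hvu, hεδ⟩
      have h₂ : (doubleCover G).Adj (u, δ) (w, ε) := ⟨huw, hεδ.symm⟩
      have h₃ : (doubleCover G).Adj (w, ε) (v, δ) := ⟨hwv, hεδ⟩
      exact h₁.reachable.trans (h₂.reachable.trans h₃.reachable)
  have hlift (u v : V) (p : G.Walk u v) (ε δ : Fin 2) :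
      (doubleCover G).Reachable (u, ε) (v, δ) := by
    induction p generalizing ε with
    | nil => exact hswitch _ ε δ
    | cons h _ ih =>
      have h' : (doubleCover G).Adj (_, ε) (_, ε + 1) := ⟨h, (Fin.two_add_one_ne ε).symm⟩
      exact h'.reachable.trans (ih _)
  have := hG.nonempty
  exact (connected_iff _).mpr ⟨fun a b => hlift _ _ (hG a.1 b.1).some _ _, inferInstance⟩

end DoubleCover

section LineGraph

variable {n : ℕ}

theorem lineK_adj_of_mem {a b : {s : Finset (Fin n) // s.card = 2}} {x : Fin n} (hab : a ≠ b)
    (ha : x ∈ a.1) (hb : x ∈ b.1) : (lineK n).Adj a b :=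
  ⟨hab, x, Finset.mem_inter.mpr ⟨ha, hb⟩⟩

theorem lineK_reachable_of_mem {a b : {s : Finset (Fin n) // s.card = 2}} {x : Fin n}
    (ha : x ∈ a.1) (hb : x ∈ b.1) : (lineK n).Reachable a b := by
  rcases eq_or_ne a b with rfl | hab
  · rfl
  · exact (lineK_adj_of_mem hab ha hb).reachable

theorem lineK_connected (hn : 2 ≤ n) : (lineK n).Connected := by
  have hpair (a : {s : Finset (Fin n) // s.card = 2}) : a.1.Nonempty :=
    Finset.card_pos.mp (by rw [a.2]; norm_num)
  refine (connected_iff _).mpr ⟨fun a b => ?_, ⟨⟨{⟨0, by omega⟩, ⟨1, by omega⟩},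
    Finset.card_pair (by simp [Fin.ext_iff])⟩⟩⟩
  obtain ⟨x, hx⟩ := hpair a
  obtain ⟨y, hy⟩ := hpair b
  rcases eq_or_ne x y with rfl | hxy
  · exact lineK_reachable_of_mem hx hy
  · let c : {s : Finset (Fin n) // s.card = 2} := ⟨{x, y}, Finset.card_pair hxy⟩
    exact (lineK_reachable_of_mem hx (by simp [c] : x ∈ c.1)).trans
      (lineK_reachable_of_mem (by simp [c] : y ∈ c.1) hy)

theorem lineK_exists_triangle (hn : 3 ≤ n) (v : {s : Finset (Fin n) // s.card = 2}) :
    ∃ u w, (lineK n).Adj v u ∧ (lineK n).Adj u w ∧ (lineK n).Adj w v := by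
  obtain ⟨x, y, hxy, hv⟩ := Finset.card_eq_two.mp v.2
  obtain ⟨z, -, hz⟩ := Finset.exists_mem_notMem_of_card_lt_card (s := v.1) (t := .univ)
    (by simp [v.2]; omega)
  simp only [hv, Finset.mem_insert, Finset.mem_singleton, not_or] at hz
  have hne {a b : {s : Finset (Fin n) // s.card = 2}} (t : Fin n) (ha : t ∈ a.1) (hb : t ∉ b.1) :
      a ≠ b := fun h => hb (h ▸ ha)
  refine ⟨⟨{x, z}, Finset.card_pair (Ne.symm hz.1)⟩, ⟨{y, z}, Finset.card_pair (Ne.symm hz.2)⟩,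
    lineK_adj_of_mem (hne y ?_ ?_) (x := x) ?_ ?_, lineK_adj_of_mem (hne x ?_ ?_) (x := z) ?_ ?_,
    lineK_adj_of_mem (hne z ?_ ?_) (x := y) ?_ ?_⟩ <;>
    simp [hv, hxy, hxy.symm, hz.1, hz.2, Ne.symm hz.1, Ne.symm hz.2]

end LineGraph

theorem lineK_six_exists_undominated (a b c : {s : Finset (Fin 6) // s.card = 2}) :
    ∃ v, ¬ (lineK 6).Adj v a ∧ ¬ (lineK 6).Adj v b ∧ ¬ (lineK 6).Adj v c := by
  revert a b c
  decide

theorem lineK_six_four_le_ncard {A : Set {s : Finset (Fin 6) // s.card = 2}}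
    (hA : TotalDomSet (lineK 6) A) : 4 ≤ A.ncard := by
  by_contra! hA3
  obtain ⟨B, hAB, -, hB⟩ := Set.exists_superset_subset_encard_eq (Set.subset_univ A) (k := 3)
    (Set.encard_le_coe_iff_finite_ncard_le (k := 3) |>.mpr ⟨A.toFinite, by omega⟩)
    (by rw [Set.encard_univ, ENat.card_eq_coe_fintype_card]; norm_cast)
  obtain ⟨a, b, c, -, -, -, rfl⟩ := Set.encard_eq_three.mp hB
  obtain ⟨v, ha, hb, hc⟩ := lineK_six_exists_undominated a b c
  obtain ⟨u, hu, hvu⟩ := hA.mono hAB v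
  rcases hu with rfl | rfl | rfl <;> contradiction

def spoke (k : Fin 4) : {s : Finset (Fin 6) // s.card = 2} :=
  ⟨{0, k.castSucc.succ}, Finset.card_pair (Fin.succ_ne_zero _).symm⟩

def spokeSeq : List ({s : Finset (Fin 6) // s.card = 2} × Fin 2) :=
  (List.finRange 2).flatMap fun ε => (List.finRange 4).map fun k => (spoke k, ε)

theorem spokeSeq_totalDomSeq : TotalDomSeq (doubleCover (lineK 6)) spokeSeq := by
  -- legality restated over `Fin`, so that `decide` can enumerate the positions
  have hlegal : ∀ i : Fin spokeSeq.length, 0 < (i : ℕ) → ∃ w, (doubleCover (lineK 6)).Adj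
      (spokeSeq.get i) w ∧ ∀ u ∈ spokeSeq.take i, ¬ (doubleCover (lineK 6)).Adj u w := by
    decide
  exact ⟨⟨by decide, fun i hi => hlegal ⟨i, hi⟩⟩, by unfold TotalDomSet; decide⟩

/- Row `(e, ε)` of the adjacency matrix in terms of the rows `(spoke k, ε)`: over `ZMod 2` the
neighbourhood of `{i, j}` is `S_i + S_j = (S_0 + S_i) + (S_0 + S_j)`, and the missing spoke
`S_0 + S_5` is the sum of the other four because `S_0 + ⋯ + S_5 = 0`. -/
def spokeCoeff : Matrix ({s : Finset (Fin 6) // s.card = 2} × Fin 2) (Fin 4 × Fin 2) (ZMod 2) :=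
  fun (e, ε) (k, δ) =>
    if ε = δ then (if k.castSucc.succ ∈ e.1 then 1 else 0) + (if 5 ∈ e.1 then 1 else 0) else 0

theorem adjMatrix_doubleCover_lineK_six :
    (doubleCover (lineK 6)).adjMatrix (ZMod 2) =
      spokeCoeff *
        Matrix.of fun (k, δ) => (doubleCover (lineK 6)).adjMatrix (ZMod 2) (spoke k, δ) := by
  decide

theorem rank_adjMatrix_doubleCover_lineK_six :
    ((doubleCover (lineK 6)).adjMatrix (ZMod 2)).rank ≤ 8 := by
  rw [adjMatrix_doubleCover_lineK_six]
  exact (Matrix.rank_mul_le_left _ _).trans ((Matrix.rank_le_card_width _).trans_eq rfl)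

/-- The bipartite double cover `L(K₆) × K₂` is connected and total 8-uniform. -/
theorem stmt_12 :
    (directProd (lineK 6) (⊤ : SimpleGraph (Fin 2))).Connected ∧
    TotalKUniform (directProd (lineK 6) (⊤ : SimpleGraph (Fin 2))) 8 := by
  have htri := lineK_exists_triangle (n := 6) (by norm_num)
  have hG : NoIsolatedVerts (lineK 6) := fun v =>
    let ⟨u, _, hvu, _⟩ := htri v
    ⟨u, hvu⟩
  refine ⟨doubleCover_connected (lineK_connected (by norm_num)) htri, ?_⟩
  exact spokeSeq_totalDomSeq.totalKUniform
    (fun A hA => hA.two_mul_le_ncard fun B hB => lineK_six_four_le_ncard hB)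
    (fun t ht => (ht.length_le_rank_adjMatrix (ZMod 2) hG.doubleCover).trans
      rank_adjMatrix_doubleCover_lineK_six)
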